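/- arXiv:1808.00985 — 5 statements merged into one kernel-verified Lean document; each statement's English description precedes it below -/
import Mathlib

section
/- Let (X,d) be a compact metric space and f : X → X a homeomorphism. If (X,f) is minimal and equicontinuous, then (X,f) has the gluing orbit property. Moreover, the shadowing point can be taken to be the first point x₁ of the orbit sequence. -/
open Filter Set Metric

namespace Paper

variable {X : Type*}

/-- Integer iteration of a homeomorphism: `f^n` for `n : ℤ`. -/
def zIter [TopologicalSpace X] (f : X ≃ₜ X) (n : ℤ) (x : X) : X :=
  if 0 ≤ n then (⇑f)^[n.toNat] x else (⇑f.symm)^[(-n).toNat] x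

/-- `(X,f)` is minimal: every (two-sided) orbit is dense. -/
def Minimal [TopologicalSpace X] (f : X ≃ₜ X) : Prop :=
  ∀ x : X, Dense (Set.range fun n : ℤ => zIter f n x)

/-- Topological transitivity. -/
def TopTransitive [TopologicalSpace X] (f : X ≃ₜ X) : Prop :=
  ∀ U V : Set X, IsOpen U → IsOpen V → U.Nonempty → V.Nonempty →
    ∃ n : ℤ, (U ∩ (zIter f n) ⁻¹' V).Nonempty

/-- Equicontinuity of the family of forward iterates. -/
def EquicontinuousSystem [MetricSpace X] (f : X → X) : Prop :=
  ∀ ε : ℝ, 0 < ε → ∃ δ : ℝ, 0 < δ ∧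
    ∀ x y : X, dist x y < δ → ∀ n : ℕ, dist (f^[n] x) (f^[n] y) < ε

/-- The transition times `s_j` (0-indexed: `s 0 = 0`,
`s (j+1) = s j + m_j + t_j - 1`) for an orbit sequence `C` (with lengths `m_j = (C j).2`)
and a gap `g`. -/
def sTimes (C : ℕ → X × ℕ) (g : ℕ → ℕ) : ℕ → ℕ
  | 0 => 0
  | j + 1 => sTimes C g j + (C j).2 + g j - 1

/-- `(C, g)` (an orbit sequence of rank `k` together with a gap) is `ε`-shadowed by `z`. -/
def Shadows [MetricSpace X] (f : X → X) (k : ℕ) (C : ℕ → X × ℕ) (g : ℕ → ℕ)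
    (ε : ℝ) (z : X) : Prop :=
  ∀ j < k, ∀ l < (C j).2, dist (f^[sTimes C g j + l] z) (f^[l] (C j).1) < ε

/-- The gluing orbit property. -/
def GluingOrbit [MetricSpace X] (f : X → X) : Prop :=
  ∀ ε : ℝ, 0 < ε → ∃ M : ℕ, 0 < M ∧
    ∀ k : ℕ, 0 < k → ∀ C : ℕ → X × ℕ, (∀ j < k, 0 < (C j).2) →
      ∃ g : ℕ → ℕ, (∀ j < k - 1, 0 < g j ∧ g j ≤ M) ∧
        ∃ z : X, Shadows f k C g ε z

/-- The specification property, at scale `ε` with constant `M`. -/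
def SpecWith [MetricSpace X] (f : X → X) (ε : ℝ) (M : ℕ) : Prop :=
  ∀ k : ℕ, 0 < k → ∀ C : ℕ → X × ℕ, (∀ j < k, 0 < (C j).2) →
    ∀ g : ℕ → ℕ, (∀ j < k - 1, M ≤ g j) →
      ∃ z : X, Shadows f k C g ε z

/-- The specification property. -/
def Specification [MetricSpace X] (f : X → X) : Prop :=
  ∀ ε : ℝ, 0 < ε → ∃ M : ℕ, 0 < M ∧ SpecWith f ε M

/-- The periodic gluing orbit property. -/
def PerGluingOrbit [MetricSpace X] (f : X → X) : Prop :=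
  ∀ ε : ℝ, 0 < ε → ∃ M : ℕ, 0 < M ∧
    ∀ k : ℕ, 0 < k → ∀ C : ℕ → X × ℕ, (∀ j < k, 0 < (C j).2) →
      ∃ t : ℕ, 0 < t ∧ t ≤ M ∧
        ∃ g : ℕ → ℕ, (∀ j < k - 1, 0 < g j ∧ g j ≤ M) ∧
          ∃ z : X, Shadows f k C g ε z ∧
            f^[sTimes C g (k - 1) + (C (k - 1)).2 + t] z = z

/-- `E` is an `(n,ε)`-separated set. -/
def IsSepSet [MetricSpace X] (f : X → X) (n : ℕ) (ε : ℝ) (E : Set X) : Prop :=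
  ∀ x ∈ E, ∀ y ∈ E, x ≠ y → ∃ k < n, ε < dist (f^[k] x) (f^[k] y)

/-- `s(n,ε)`: the maximal cardinality of an `(n,ε)`-separated subset of `X`. -/
noncomputable def sepNum [MetricSpace X] (f : X → X) (n : ℕ) (ε : ℝ) : ℕ :=
  sSup {N : ℕ | ∃ E : Finset X, IsSepSet f n ε ↑E ∧ E.card = N}

/-- Topological entropy `h(f) = lim_{ε → 0⁺} limsup_n (ln s(n,ε))/n`; since the inner
quantity is monotone as `ε` decreases, the limit equals the supremum over `ε > 0`. -/
noncomputable def topEnt [MetricSpace X] (f : X → X) : EReal :=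
  ⨆ (ε : ℝ) (_ : 0 < ε),
    Filter.limsup (fun n : ℕ => ((Real.log (sepNum f n ε) / n : ℝ) : EReal)) Filter.atTop

/-- The set of periodic points of period at most `n`. -/
def perPts (f : X → X) (n : ℕ) : Set X :=
  {x | ∃ m : ℕ, 0 < m ∧ m ≤ n ∧ f^[m] x = x}

open Classical in
/-- `p(f) = limsup_n (ln p_n(f))/n`, the exponential growth rate of periodic points
(`⊤` contributions when there are infinitely many such points). -/
noncomputable def perGrowth (f : X → X) : EReal :=
  Filter.limsup (fun n : ℕ =>
      if h : (perPts f n).Finite then ((Real.log (perPts f n).ncard / n : ℝ) : EReal) else ⊤)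
    Filter.atTop

/-- The lower box dimension of `X`, `liminf_{ε→0⁺} ln s(1,ε) / (-ln ε)`. -/
noncomputable def lowerBoxDim [MetricSpace X] (f : X → X) : EReal :=
  Filter.liminf (fun ε : ℝ => ((Real.log (sepNum f 1 ε) / (-Real.log ε) : ℝ) : EReal))
    (nhdsWithin 0 (Set.Ioi 0))



































/-! Semiflow case -/

/-- `φ` is a continuous semiflow on `X` (for nonnegative times). -/
def IsSemiflow [TopologicalSpace X] (φ : ℝ → X → X) : Prop :=
  (∀ x : X, φ 0 x = x) ∧
    (∀ s t : ℝ, 0 ≤ s → 0 ≤ t → ∀ x : X, φ (s + t) x = φ s (φ t x)) ∧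
      Continuous fun p : ℝ × X => φ p.1 p.2

/-- Minimality of a semiflow: every forward orbit is dense. -/
def MinimalFlow [TopologicalSpace X] (φ : ℝ → X → X) : Prop :=
  ∀ x : X, Dense {y : X | ∃ t : ℝ, 0 ≤ t ∧ φ t x = y}

/-- Transition times for the semiflow gluing: `s 0 = 0`, `s (j+1) = s j + m_j + t_j`. -/
def sFlow (C : ℕ → X × ℝ) (g : ℕ → ℝ) : ℕ → ℝ
  | 0 => 0
  | j + 1 => sFlow C g j + (C j).2 + g j

/-- Gluing orbit property for a semiflow. -/
def GluingFlow [MetricSpace X] (φ : ℝ → X → X) : Prop :=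
  ∀ ε : ℝ, 0 < ε → ∃ M : ℝ, 0 < M ∧
    ∀ k : ℕ, 0 < k → ∀ C : ℕ → X × ℝ, (∀ j < k, 0 ≤ (C j).2) →
      ∃ g : ℕ → ℝ, (∀ j < k - 1, 0 ≤ g j ∧ g j ≤ M) ∧
        ∃ z : X, ∀ j < k, ∀ t ∈ Set.Icc (0 : ℝ) (C j).2,
          dist (φ (sFlow C g j + t) z) (φ t (C j).1) < ε

/-- `E` is a `(T,ε)`-separated set for the semiflow `φ`. -/
def IsSepFlow [MetricSpace X] (φ : ℝ → X → X) (T ε : ℝ) (E : Set X) : Prop :=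
  ∀ x ∈ E, ∀ y ∈ E, x ≠ y → ∃ t ∈ Set.Icc (0 : ℝ) T, ε < dist (φ t x) (φ t y)

/-- `s(T,ε)` for the semiflow. -/
noncomputable def sepFlow [MetricSpace X] (φ : ℝ → X → X) (T ε : ℝ) : ℕ :=
  sSup {N : ℕ | ∃ E : Finset X, IsSepFlow φ T ε ↑E ∧ E.card = N}

/-- Topological entropy of a semiflow. -/
noncomputable def topEntFlow [MetricSpace X] (φ : ℝ → X → X) : EReal :=
  ⨆ (ε : ℝ) (_ : 0 < ε),
    Filter.limsup (fun T : ℝ => ((Real.log (sepFlow φ T ε) / T : ℝ) : EReal)) Filter.atTop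

/-!
Equicontinuity provides `δ` such that any point `δ`-close to `x` shadows the whole forward orbit
of `x`. It therefore suffices to reach the `δ`-ball around any point from any other point in a
positive number of steps bounded by some `M`, and then to glue greedily, starting at `x₁` itself.
Minimality and compactness bound the two-sided times needed by some `L`; equicontinuity and
compactness give an almost period `p > L`, i.e. `f^p` uniformly close to the identity, so the
forward times `p + n` with `|n| ≤ L` work.
-/

lemma exists_add_lt_forall_dist_iterate_lt [MetricSpace X] [CompactSpace X] {ι : Type*}
    [Fintype ι] (f : X → X) (y : ι → X) {β : ℝ} (hβ : 0 < β) (L : ℕ) :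
    ∃ n n' : ℕ, n + L < n' ∧ ∀ i, dist (f^[n'] (y i)) (f^[n] (y i)) < β := by
  obtain ⟨_, φ, hφ, hlim⟩ := SeqCompactSpace.tendsto_subseq fun n i => f^[n] (y i)
  obtain ⟨N, hN⟩ := Metric.cauchySeq_iff'.1 hlim.cauchySeq β hβ
  refine ⟨φ N, φ (L + 1 + N), by linarith [hφ.add_le_nat (L + 1) N], fun i => ?_⟩
  exact (dist_le_pi_dist _ _ i).trans_lt (hN _ (by omega))

lemma exists_lt_forall_dist_iterate_self_lt [MetricSpace X] [CompactSpace X] {f : X → X}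
    (hf : Function.Surjective f) (heq : EquicontinuousSystem f) {η : ℝ} (hη : 0 < η) (L : ℕ) :
    ∃ p : ℕ, L < p ∧ ∀ y : X, dist (f^[p] y) y < η := by
  obtain ⟨α, hα, hmod⟩ := heq (η / 3) (by positivity)
  obtain ⟨t, ht⟩ := finite_cover_nhds fun x : X => ball_mem_nhds x hα
  -- the points of a finite `α`-net return simultaneously; equicontinuity spreads this to all of `X`
  obtain ⟨n, n', hnn', hnet⟩ :=
    exists_add_lt_forall_dist_iterate_lt f ((↑) : t → X) (by positivity : 0 < η / 3) L
  refine ⟨n' - n, by omega, fun y => ?_⟩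
  obtain ⟨x, rfl⟩ := hf.iterate n y
  obtain ⟨c, hct, hxc⟩ : ∃ c ∈ t, dist x c < α := by
    have hx : x ∈ ⋃ c ∈ t, ball c α := ht ▸ mem_univ x
    simpa only [mem_iUnion, mem_ball, exists_prop] using hx
  have hshift : f^[n' - n] (f^[n] x) = f^[n'] x := by
    rw [← Function.iterate_add_apply, Nat.sub_add_cancel (by omega)]
  calc dist (f^[n' - n] (f^[n] x)) (f^[n] x)
      ≤ dist (f^[n'] x) (f^[n'] c) + dist (f^[n'] c) (f^[n] c) + dist (f^[n] c) (f^[n] x) := by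
        rw [hshift]; exact dist_triangle4 _ _ _ _
    _ < η / 3 + η / 3 + η / 3 := by
        gcongr
        · exact hmod x c hxc n'
        · exact hnet ⟨c, hct⟩
        · rw [dist_comm]; exact hmod x c hxc n
    _ = η := by ring

lemma continuous_zIter [TopologicalSpace X] (f : X ≃ₜ X) (n : ℤ) : Continuous (zIter f n) := by
  unfold zIter
  split_ifs
  · exact f.continuous.iterate _
  · exact f.symm.continuous.iterate _

lemma iterate_zIter [TopologicalSpace X] (f : X ≃ₜ X) {n : ℤ} {p : ℕ} (h : n.natAbs ≤ p)
    (w : X) : (⇑f)^[p] (zIter f n w) = (⇑f)^[(p + n).toNat] w := by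
  unfold zIter
  split_ifs with hn
  · rw [← Function.iterate_add_apply]
    congr 1
    omega
  · obtain ⟨q, rfl⟩ : ∃ q, p = q + (-n).toNat := ⟨p - (-n).toNat, by omega⟩
    rw [Function.iterate_add_apply, (Function.LeftInverse.iterate f.apply_symm_apply _) w]
    congr 1
    omega

lemma Minimal.exists_natAbs_le_dist_zIter_lt [MetricSpace X] [CompactSpace X] {f : X ≃ₜ X}
    (hmin : Minimal f) {η : ℝ} (hη : 0 < η) :
    ∃ L : ℕ, ∀ w x : X, ∃ n : ℤ, n.natAbs ≤ L ∧ dist (zIter f n w) x < η := by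
  have hopen (n : ℤ) : IsOpen {q : X × X | dist (zIter f n q.1) q.2 < η} :=
    isOpen_lt (((continuous_zIter f n).comp continuous_fst).dist continuous_snd) continuous_const
  have hcover : (univ : Set (X × X)) ⊆ ⋃ n : ℤ, {q | dist (zIter f n q.1) q.2 < η} := by
    rintro ⟨w, x⟩ -
    obtain ⟨n, hn⟩ := DenseRange.exists_dist_lt (hmin w) x hη
    exact mem_iUnion.2 ⟨n, by rwa [dist_comm] at hn⟩
  obtain ⟨t, ht⟩ := isCompact_univ.elim_finite_subcover _ hopen hcover
  refine ⟨t.sup Int.natAbs, fun w x => ?_⟩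
  obtain ⟨n, hnt, hn⟩ := mem_iUnion₂.1 (ht (mem_univ (w, x)))
  exact ⟨n, Finset.le_sup hnt, hn⟩

lemma exists_iterate_dist_lt_of_minimal_of_equicontinuous [MetricSpace X] [CompactSpace X]
    {f : X ≃ₜ X} (hmin : Minimal f) (heq : EquicontinuousSystem ⇑f) {η : ℝ} (hη : 0 < η) :
    ∃ M : ℕ, 0 < M ∧ ∀ w x : X, ∃ t : ℕ, 0 < t ∧ t ≤ M ∧ dist ((⇑f)^[t] w) x < η := by
  obtain ⟨L, hL⟩ := hmin.exists_natAbs_le_dist_zIter_lt (half_pos hη)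
  obtain ⟨p, hLp, hp⟩ := exists_lt_forall_dist_iterate_self_lt f.surjective heq (half_pos hη) L
  refine ⟨p + L, by omega, fun w x => ?_⟩
  obtain ⟨n, hnL, hn⟩ := hL w x
  refine ⟨(p + n).toNat, by omega, by omega, ?_⟩
  rw [← iterate_zIter f (by omega) w]
  calc dist ((⇑f)^[p] (zIter f n w)) x
      ≤ dist ((⇑f)^[p] (zIter f n w)) (zIter f n w) + dist (zIter f n w) x := dist_triangle _ _ _
    _ < η / 2 + η / 2 := add_lt_add (hp _) hn
    _ = η := add_halves η

/-- Start times of greedy gluing: segment `j` ends at time `greedyTimes j + m_j - 1`, from where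
`T` steps lead close to the next starting point. -/
def greedyTimes (f : X → X) (T : X → X → ℕ) (C : ℕ → X × ℕ) : ℕ → ℕ
  | 0 => 0
  | j + 1 => T (f^[greedyTimes f T C j + (C j).2 - 1] (C 0).1) (C (j + 1)).1 +
      (greedyTimes f T C j + (C j).2 - 1)

def greedyGap (f : X → X) (T : X → X → ℕ) (C : ℕ → X × ℕ) (j : ℕ) : ℕ :=
  T (f^[greedyTimes f T C j + (C j).2 - 1] (C 0).1) (C (j + 1)).1

lemma sTimes_greedyGap (f : X → X) (T : X → X → ℕ) {C : ℕ → X × ℕ} {j : ℕ}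
    (hC : ∀ i < j, 0 < (C i).2) : sTimes C (greedyGap f T C) j = greedyTimes f T C j := by
  induction j with
  | zero => rfl
  | succ j ih =>
    have hm := hC j j.lt_succ_self
    rw [sTimes, greedyTimes, ih fun i hi => hC i (by omega), greedyGap]
    omega

theorem exists_gap_shadows_of_forall_exists_iterate_dist_lt [MetricSpace X] {f : X → X}
    {ε δ : ℝ} {M : ℕ} (hδ : 0 < δ)
    (hmod : ∀ x y : X, dist x y < δ → ∀ n : ℕ, dist (f^[n] x) (f^[n] y) < ε)
    (hhit : ∀ w x : X, ∃ t : ℕ, 0 < t ∧ t ≤ M ∧ dist (f^[t] w) x < δ) {k : ℕ}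
    {C : ℕ → X × ℕ} (hC : ∀ j < k, 0 < (C j).2) :
    ∃ g : ℕ → ℕ, (∀ j, 0 < g j ∧ g j ≤ M) ∧ Shadows f k C g ε (C 0).1 := by
  choose T hT0 hTM hT using hhit
  refine ⟨greedyGap f T C, fun j => ⟨hT0 _ _, hTM _ _⟩, fun j hj l _ => ?_⟩
  have hstart : dist (f^[sTimes C (greedyGap f T C) j] (C 0).1) (C j).1 < δ := by
    rw [sTimes_greedyGap f T fun i hi => hC i (by omega)]
    cases j with
    | zero => simpa [greedyTimes] using hδ
    | succ j => rw [greedyTimes, Function.iterate_add_apply]; exact hT _ _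
  rw [add_comm, Function.iterate_add_apply]
  exact hmod _ _ hstart l

theorem stmt14 [MetricSpace X] [CompactSpace X] (f : X ≃ₜ X)
    (hmin : Minimal f) (heq : EquicontinuousSystem (⇑f)) :
    ∀ ε : ℝ, 0 < ε → ∃ M : ℕ, 0 < M ∧
      ∀ k : ℕ, 0 < k → ∀ C : ℕ → X × ℕ, (∀ j < k, 0 < (C j).2) →
        ∃ g : ℕ → ℕ, (∀ j < k - 1, 0 < g j ∧ g j ≤ M) ∧
          Shadows (⇑f) k C g ε ((C 0).1) := by
  intro ε hε
  obtain ⟨δ, hδ, hmod⟩ := heq ε hε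
  obtain ⟨M, hM, hhit⟩ := exists_iterate_dist_lt_of_minimal_of_equicontinuous hmin heq hδ
  refine ⟨M, hM, fun k _ C hC => ?_⟩
  obtain ⟨g, hg, hshadow⟩ := exists_gap_shadows_of_forall_exists_iterate_dist_lt hδ hmod hhit hC
  exact ⟨g, fun j _ => hg j, hshadow⟩

end Paper
end

section
/- Let (X,d) be a compact metric space and f : X → X a homeomorphism. If (X,f) is topologically transitive and equicontinuous, then (X,f) is minimal. -/
open Filter Set Metric

namespace Paper

variable {X : Type*}

/-- Auxiliary: on a compact metric space, an equicontinuous homeomorphism has iterates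
uniformly arbitrarily close to the identity, with arbitrarily large times. -/
lemma almostPer_aux [MetricSpace X] [CompactSpace X] (f : X ≃ₜ X)
    (heq : EquicontinuousSystem (⇑f)) {η : ℝ} (hη : 0 < η) (J : ℕ) (hJpos : 0 < J) :
    ∃ m : ℕ, J ≤ m ∧ ∀ z : X, dist ((⇑f)^[m] z) z < η := by
  obtain ⟨δ, hδ, hδ'⟩ := heq (η/3) (by positivity)
  obtain ⟨t, -, htfin, htcov⟩ := isCompact_univ.finite_cover_balls (s := (univ : Set X)) hδ
  haveI := htfin.fintype
  set F : ℕ → (t → X) := fun n i => (⇑f)^[n * J] i.1 with hF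
  obtain ⟨p, hp⟩ := exists_clusterPt_of_compactSpace (Filter.map F atTop)
  have hfreq : ∃ᶠ n in atTop, F n ∈ ball p (η/6) :=
    mapClusterPt_iff_frequently.1 hp _ (ball_mem_nhds p (by positivity))
  obtain ⟨n, -, hn⟩ := frequently_atTop.1 hfreq 0
  obtain ⟨n', hn'ge, hn'⟩ := frequently_atTop.1 hfreq (n+1)
  refine ⟨(n' - n) * J, Nat.le_mul_of_pos_left J (by omega), fun z => ?_⟩
  have hsurj : Function.Surjective ((⇑f)^[n * J]) := f.surjective.iterate _
  obtain ⟨w, hw⟩ := hsurj z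
  obtain ⟨c, hc, hcw⟩ : ∃ c ∈ t, w ∈ ball c δ := by
    have := htcov (mem_univ w); simpa using this
  set i : t := ⟨c, hc⟩
  have key : dist (F n' i) (F n i) < η/3 := by
    calc dist (F n' i) (F n i) ≤ dist (F n' i) (p i) + dist (p i) (F n i) := dist_triangle _ _ _
    _ ≤ dist (F n') p + dist p (F n) := by
        gcongr
        · exact dist_le_pi_dist (F n') p i
        · exact dist_le_pi_dist p (F n) i
    _ < η/6 + η/6 := by
        have h1 := mem_ball.1 hn'
        have h2 := mem_ball.1 hn
        rw [dist_comm p (F n)]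
        exact add_lt_add h1 h2
    _ = η/3 := by ring
  have hdwc : dist w c < δ := mem_ball.1 hcw
  have e1 : dist ((⇑f)^[n' * J] w) ((⇑f)^[n' * J] c) < η/3 := hδ' w c hdwc _
  have e2 : dist ((⇑f)^[n * J] c) ((⇑f)^[n * J] w) < η/3 := by
    rw [dist_comm]; exact hδ' w c hdwc _
  have hiter : (⇑f)^[(n' - n) * J] z = (⇑f)^[n' * J] w := by
    rw [← hw, ← Function.iterate_add_apply]
    congr 1
    rw [← Nat.add_mul, Nat.sub_add_cancel (by omega : n ≤ n')]
  calc dist ((⇑f)^[(n' - n) * J] z) z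
      = dist ((⇑f)^[n' * J] w) ((⇑f)^[n * J] w) := by rw [hiter, ← hw]
    _ ≤ dist ((⇑f)^[n' * J] w) ((⇑f)^[n' * J] c) + dist ((⇑f)^[n' * J] c) ((⇑f)^[n * J] c)
        + dist ((⇑f)^[n * J] c) ((⇑f)^[n * J] w) := dist_triangle4 _ _ _ _
    _ < η/3 + η/3 + η/3 := add_lt_add (add_lt_add e1 key) e2
    _ = η := by ring

theorem stmt15 [MetricSpace X] [CompactSpace X] (f : X ≃ₜ X)
    (htr : TopTransitive f) (heq : EquicontinuousSystem (⇑f)) :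
    Minimal f := by
  intro x
  rw [Metric.dense_iff]
  intro y ε hε
  obtain ⟨δ, hδ, hδ'⟩ := heq (ε/3) (by positivity)
  obtain ⟨n, u, hu⟩ := htr (ball x δ) (ball y (ε/3)) isOpen_ball isOpen_ball
    ⟨x, mem_ball_self hδ⟩ ⟨y, mem_ball_self (by positivity)⟩
  have hxu : dist x u < δ := by
    have := mem_ball.1 hu.1; rwa [dist_comm] at this
  have hun : dist (zIter f n u) y < ε/3 := mem_ball.1 hu.2
  by_cases hn : 0 ≤ n
  · have hz : zIter f n u = (⇑f)^[n.toNat] u := if_pos hn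
    refine ⟨(⇑f)^[n.toNat] x, ?_, ⟨n, if_pos hn⟩⟩
    rw [mem_ball]
    calc dist ((⇑f)^[n.toNat] x) y
        ≤ dist ((⇑f)^[n.toNat] x) ((⇑f)^[n.toNat] u) + dist ((⇑f)^[n.toNat] u) y :=
          dist_triangle _ _ _
      _ < ε/3 + ε/3 := by
          refine add_lt_add (hδ' x u hxu _) ?_
          rwa [hz] at hun
      _ < ε := by linarith
  · set j : ℕ := (-n).toNat with hj
    have hjpos : 0 < j := by omega
    have hz : zIter f n u = (⇑f.symm)^[j] u := if_neg hn
    obtain ⟨m, hm, hm'⟩ := almostPer_aux f heq (show (0:ℝ) < ε/3 by positivity) j hjpos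
    set k : ℕ := m - j with hk
    set w : X := (⇑f.symm)^[j] u with hwdef
    have hli : Function.LeftInverse ⇑f ⇑f.symm := f.apply_symm_apply
    have hw : (⇑f)^[j] w = u := hli.iterate j u
    have e2 : (⇑f)^[k] u = (⇑f)^[m] w := by
      rw [← hw, ← Function.iterate_add_apply]
      congr 1
      omega
    refine ⟨(⇑f)^[k] x, ?_, ⟨(k : ℤ), ?_⟩⟩
    · rw [mem_ball]
      calc dist ((⇑f)^[k] x) y
          ≤ dist ((⇑f)^[k] x) ((⇑f)^[k] u) + dist ((⇑f)^[k] u) w + dist w y :=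
            dist_triangle4 _ _ _ _
        _ < ε/3 + ε/3 + ε/3 := by
            refine add_lt_add (add_lt_add (hδ' x u hxu _) ?_) ?_
            · rw [e2]; exact hm' w
            · rwa [hz] at hun
        _ = ε := by ring
    · show zIter f (k : ℤ) x = _
      rw [zIter, if_pos (Int.natCast_nonneg k), Int.toNat_natCast]

end Paper
end

section
/- Let (f^t)_{t≥0} be a continuous semiflow on a compact metric space (X,d) that is not minimal and has the gluing orbit property. Then there exist x₀ ∈ X, ε > 0 and τ > 0 such that d(f^t(x₀), x₀) > ε for every t ≥ τ. -/
open Filter Set Metric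

namespace Paper

variable {X : Type*}

theorem stmt17 [MetricSpace X] [CompactSpace X] (φ : ℝ → X → X)
    (hsf : IsSemiflow φ) (hnm : ¬ MinimalFlow φ) (hgo : GluingFlow φ) :
    ∃ x₀ : X, ∃ ε τ : ℝ, 0 < ε ∧ 0 < τ ∧
      ∀ t : ℝ, τ ≤ t → ε < dist (φ t x₀) x₀ := by
  obtain ⟨h0, hadd, hcont⟩ := hsf
  have hct : ∀ t : ℝ, Continuous fun u : X => φ t u := fun t =>
    hcont.comp (continuous_const.prodMk continuous_id)
  simp only [MinimalFlow, not_forall] at hnm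
  obtain ⟨x, hx⟩ := hnm
  have hx' : ∃ y : X, y ∉ closure {y : X | ∃ t : ℝ, 0 ≤ t ∧ φ t x = y} := by
    by_contra h
    push_neg at h
    exact hx h
  obtain ⟨y, hy⟩ := hx'
  rw [Metric.mem_closure_iff] at hy
  push_neg at hy
  obtain ⟨r, hr, hyr⟩ := hy
  have hfar : ∀ s : ℝ, 0 ≤ s → r ≤ dist y (φ s x) := fun s hs =>
    hyr (φ s x) ⟨s, hs, rfl⟩
  obtain ⟨M, hM, hglue⟩ := hgo (r / 4) (by positivity)
  have key : ∀ n : ℕ, ∃ z : X, dist z y < r / 4 ∧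
      ∀ t : ℝ, M ≤ t → t ≤ (n : ℝ) → r / 2 < dist (φ t z) z := by
    intro n
    set C : ℕ → X × ℝ := fun j => if j = 0 then (y, 0) else (x, (n : ℝ)) with hC
    obtain ⟨g, hg, z, hzsh⟩ := hglue 2 two_pos C (by
      intro j _
      by_cases hj : j = 0 <;> simp [hC, hj])
    obtain ⟨hg0, hg0M⟩ := hg 0 (by norm_num)
    have hC0 : (C 0).2 = 0 := by simp [hC]
    have hsF0 : sFlow C g 0 = 0 := rfl
    have hsF1 : sFlow C g 1 = g 0 := by
      show sFlow C g 0 + (C 0).2 + g 0 = g 0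
      rw [hsF0, hC0]; ring
    have hzy : dist z y < r / 4 := by
      have := hzsh 0 two_pos 0 (by rw [hC0]; exact ⟨le_refl 0, le_refl 0⟩)
      rw [hsF0] at this
      simpa [h0, hC] using this
    refine ⟨z, hzy, fun t htM htn => ?_⟩
    set s : ℝ := t - g 0 with hs
    have hs0 : 0 ≤ s := by linarith
    have hsn : s ≤ (n : ℝ) := by linarith
    have hsh1 := hzsh 1 one_lt_two s (by exact ⟨hs0, by simpa [hC] using hsn⟩)
    rw [hsF1] at hsh1
    have hgs : g 0 + s = t := by ring
    rw [hgs] at hsh1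
    have hC1 : (C 1).1 = x := by simp [hC]
    rw [hC1] at hsh1
    have h2 : r ≤ dist y (φ s x) := hfar s hs0
    have h3 := dist_triangle4 y z (φ t z) (φ s x)
    have h4 : dist y z = dist z y := dist_comm y z
    have h5 : dist (φ t z) (φ s x) < r / 4 := hsh1
    have h6 : dist (φ t z) z = dist z (φ t z) := dist_comm _ _
    linarith
  choose z hz1 hz2 using key
  obtain ⟨x₀, -, σ, hσ, hlim⟩ := isCompact_univ.tendsto_subseq
    (fun n => Set.mem_univ (z n))
  refine ⟨x₀, r / 4, M, by positivity, hM, fun t ht => ?_⟩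
  have htend : Tendsto (fun k => dist (φ t (z (σ k))) (z (σ k))) atTop
      (nhds (dist (φ t x₀) x₀)) :=
    (((hct t).tendsto x₀).comp hlim).dist hlim
  have hle : r / 2 ≤ dist (φ t x₀) x₀ := by
    refine ge_of_tendsto htend ?_
    filter_upwards [eventually_ge_atTop ⌈t⌉₊] with k hk
    have hσk : (⌈t⌉₊ : ℝ) ≤ (σ k : ℝ) := by
      exact_mod_cast le_trans hk (hσ.le_apply)
    exact (hz2 (σ k) t ht (le_trans (Nat.le_ceil t) hσk)).le
  linarith

end Paper
end

section
/- Let (f^t)_{t≥0} be a continuous semiflow on a compact metric space (X,d) that is not minimal and has the gluing orbit property. Then there exist x, y ∈ X, ε > 0 and T > 0 such that: d(f^t(x), x) ≥ ε for every t ≥ T; d(f^t(y), x) ≥ ε for every t ≥ T; d(f^t(y), y) ≥ ε for every t ≥ T; and d(f^t(x), y) ≥ ε for every t ≥ 0. -/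
open Filter Set Metric

namespace Paper

variable {X : Type*}

open Topology in
/-- Auxiliary construction: using the gluing orbit property at scale `ε` with gap bound `M`,
for any points `q p` there is a point `x` that is `ε`-close to `q` and whose orbit after
time `M` stays within `ε` of the forward orbit of `p`. -/
lemma sink_aux [MetricSpace X] [CompactSpace X] {φ : ℝ → X → X}
    (hsf : IsSemiflow φ) {ε M : ℝ} (hε : 0 < ε)
    (hglue : ∀ k : ℕ, 0 < k → ∀ C : ℕ → X × ℝ, (∀ j < k, 0 ≤ (C j).2) →
      ∃ g : ℕ → ℝ, (∀ j < k - 1, 0 ≤ g j ∧ g j ≤ M) ∧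
        ∃ z : X, ∀ j < k, ∀ t ∈ Set.Icc (0 : ℝ) (C j).2,
          dist (φ (sFlow C g j + t) z) (φ t (C j).1) < ε)
    (q p : X) :
    ∃ x : X, dist x q ≤ ε ∧
      ∀ t : ℝ, M ≤ t → infDist (φ t x) {y | ∃ s : ℝ, 0 ≤ s ∧ φ s p = y} ≤ ε := by
  set Orb := {y | ∃ s : ℝ, 0 ≤ s ∧ φ s p = y} with hOrb
  have key : ∀ n : ℕ, ∃ z : X, dist z q < ε ∧
      ∀ t : ℝ, M ≤ t → t ≤ (n : ℝ) → infDist (φ t z) Orb < ε := by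
    intro n
    set C : ℕ → X × ℝ := fun j => if j = 0 then (q, 0) else (p, (n : ℝ)) with hC
    obtain ⟨g, hg, z, hz⟩ := hglue 2 (by norm_num) C (by
      intro j hj
      by_cases h : j = 0 <;> simp [hC, h])
    have hg0 := hg 0 (by norm_num)
    refine ⟨z, ?_, ?_⟩
    · have h0 := hz 0 (by norm_num) 0 (by simp [hC])
      simpa [hC, sFlow, hsf.1] using h0
    · intro t hMt htn
      have ht' : t - g 0 ∈ Set.Icc (0 : ℝ) (C 1).2 := by
        simp only [hC]
        norm_num
        constructor <;> linarith [hg0.1, hg0.2]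
      have h1 := hz 1 (by norm_num) _ ht'
      have hs1 : sFlow C g 1 + (t - g 0) = t := by
        simp [sFlow, hC]
      rw [hs1] at h1
      have hmem : φ (t - g 0) p ∈ Orb := ⟨t - g 0, by linarith [hg0.2], rfl⟩
      calc infDist (φ t z) Orb ≤ dist (φ t z) (φ (t - g 0) p) :=
            Metric.infDist_le_dist_of_mem hmem
        _ < ε := by simpa [hC] using h1
  choose z hz1 hz2 using key
  obtain ⟨x, σ, hσ, hconv⟩ := CompactSpace.tendsto_subseq z
  have hcont : ∀ t : ℝ, Continuous (φ t) := fun t =>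
    hsf.2.2.comp (continuous_const.prodMk continuous_id)
  refine ⟨x, ?_, ?_⟩
  · have h1 : Tendsto (fun n => dist ((z ∘ σ) n) q) atTop (𝓝 (dist x q)) :=
      hconv.dist tendsto_const_nhds
    exact le_of_tendsto h1 (Filter.Eventually.of_forall fun n => (hz1 _).le)
  · intro t hMt
    have h1 : Tendsto (fun n => infDist (φ t ((z ∘ σ) n)) Orb) atTop
        (𝓝 (infDist (φ t x) Orb)) :=
      (((Metric.continuous_infDist_pt Orb).comp (hcont t)).tendsto x).comp hconv
    refine le_of_tendsto h1 ?_
    filter_upwards [Filter.eventually_ge_atTop ⌈t⌉₊] with n hn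
    have hτ : t ≤ ((σ n : ℕ) : ℝ) :=
      le_trans (Nat.le_ceil t) (by exact_mod_cast le_trans hn hσ.le_apply)
    exact (hz2 (σ n) t hMt hτ).le

theorem stmt18 [MetricSpace X] [CompactSpace X] (φ : ℝ → X → X)
    (hsf : IsSemiflow φ) (hnm : ¬ MinimalFlow φ) (hgo : GluingFlow φ) :
    ∃ x y : X, ∃ ε T : ℝ, 0 < ε ∧ 0 < T ∧
      (∀ t : ℝ, T ≤ t → ε ≤ dist (φ t x) x) ∧
      (∀ t : ℝ, T ≤ t → ε ≤ dist (φ t y) x) ∧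
      (∀ t : ℝ, T ≤ t → ε ≤ dist (φ t y) y) ∧
      (∀ t : ℝ, 0 ≤ t → ε ≤ dist (φ t x) y) := by
  obtain ⟨p, hp⟩ : ∃ p : X, ¬ Dense {y : X | ∃ t : ℝ, 0 ≤ t ∧ φ t p = y} := by
    by_contra h; push_neg at h; exact hnm h
  set Orb := {y : X | ∃ t : ℝ, 0 ≤ t ∧ φ t p = y} with hOrbdef
  have hOrbne : Orb.Nonempty := ⟨p, 0, le_refl 0, hsf.1 p⟩
  obtain ⟨q, hq⟩ : ∃ q : X, q ∉ closure Orb := by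
    by_contra h; push_neg at h; exact hp h
  have hqpos : 0 < infDist q Orb := by
    rw [← Metric.infDist_closure]
    exact (isClosed_closure.notMem_iff_infDist_pos hOrbne.closure).1 hq
  set ε := infDist q Orb / 4 with hεdef
  have hε : 0 < ε := by positivity
  obtain ⟨M, hM, hglue⟩ := hgo ε hε
  obtain ⟨x, hxq, hxsink⟩ := sink_aux hsf hε hglue q p
  have hcont : Continuous fun pr : ℝ × X => φ pr.1 pr.2 := hsf.2.2
  have hq4 : infDist q Orb = 4 * ε := by rw [hεdef]; ring
  have hxY : 3 * ε ≤ infDist x Orb := by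
    have h1 : infDist q Orb ≤ infDist x Orb + dist q x :=
      Metric.infDist_le_infDist_add_dist
    have hd : dist q x ≤ ε := by rw [dist_comm]; exact hxq
    linarith
  set A := (fun pr : ℝ × X => φ pr.1 pr.2) '' (Set.Icc (0 : ℝ) M ×ˢ {x}) with hA
  have hAcomp : IsCompact A := (isCompact_Icc.prod isCompact_singleton).image hcont
  set NY := {w : X | infDist w Orb ≤ ε} with hNY
  have hNYclosed : IsClosed NY :=
    isClosed_le (Metric.continuous_infDist_pt Orb) continuous_const
  set S := A ∪ NY with hS
  have hSclosed : IsClosed S := hAcomp.isClosed.union hNYclosed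
  have hSne : S.Nonempty := ⟨x, Or.inl ⟨(0, x), ⟨⟨le_refl 0, hM.le⟩, rfl⟩, hsf.1 x⟩⟩
  have hOrbS : Orb ⊆ S := fun w hw =>
    Or.inr (le_trans (le_of_eq (Metric.infDist_zero_of_mem hw)) hε.le)
  have hxorbS : ∀ t : ℝ, 0 ≤ t → φ t x ∈ S := by
    intro t ht
    rcases le_or_gt t M with h | h
    · exact Or.inl ⟨(t, x), ⟨⟨ht, h⟩, rfl⟩, rfl⟩
    · exact Or.inr (hxsink t h.le)
  have hfar : ∀ w : X, dist w q < ε → w ∉ NY := by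
    intro w hw hwN
    have h1 : infDist q Orb ≤ infDist w Orb + dist q w :=
      Metric.infDist_le_infDist_add_dist
    rw [dist_comm] at hw
    have h2 : infDist w Orb ≤ ε := hwN
    linarith
  obtain ⟨q', hq'S⟩ : ∃ q' : X, q' ∉ S := by
    by_contra h; push_neg at h
    set C : ℕ → X × ℝ := fun j => if j = 0 then (q, M + 1) else (q, 0) with hC
    obtain ⟨g, hg, z, hz⟩ := hglue 2 (by norm_num) C (by
      intro j hj; by_cases hj0 : j = 0 <;> simp [hC, hj0] <;> linarith)
    have hg0 := hg 0 (by norm_num)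
    have hz0 : dist z q < ε := by
      have h0 := hz 0 (by norm_num) 0 (by simp [hC]; linarith)
      simpa [hC, sFlow, hsf.1] using h0
    have hz1 : dist (φ (M + 1 + g 0) z) q < ε := by
      have h1 := hz 1 (by norm_num) 0 (by simp [hC])
      have hs1 : sFlow C g 1 + 0 = M + 1 + g 0 := by simp [sFlow, hC]
      rw [hs1] at h1
      simpa [hC, hsf.1] using h1
    have hzA : z ∈ A := (h z).resolve_right (hfar z hz0)
    obtain ⟨⟨τ, x'⟩, ⟨hτI, hx'⟩, hzeq⟩ := hzA
    have hx'x : x' = x := hx'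
    have hτ0 : (0 : ℝ) ≤ τ := hτI.1
    have hzeq2 : φ τ x = z := by rw [← hx'x]; exact hzeq
    have hcomm : φ (M + 1 + g 0) z = φ (M + 1 + g 0 + τ) x := by
      rw [← hzeq2, ← hsf.2.1 (M + 1 + g 0) τ (by linarith [hg0.1]) hτ0]
    have hge : M ≤ M + 1 + g 0 + τ := by linarith [hg0.1]
    have hsink := hxsink (M + 1 + g 0 + τ) hge
    rw [← hcomm] at hsink
    exact hfar _ hz1 hsink
  have hδ : 0 < infDist q' S := (hSclosed.notMem_iff_infDist_pos hSne).1 hq'S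
  set δ := infDist q' S with hδdef
  set ε' := min ε (δ / 4) with hε'def
  have hε' : 0 < ε' := lt_min hε (by positivity)
  have hε'ε : ε' ≤ ε := min_le_left _ _
  have hε'δ : ε' ≤ δ / 4 := min_le_right _ _
  obtain ⟨M', hM', hglue'⟩ := hgo ε' hε'
  obtain ⟨y, hyq', hysink⟩ := sink_aux hsf hε' hglue' q' p
  have hq'Orb : δ ≤ infDist q' Orb :=
    Metric.infDist_le_infDist_of_subset hOrbS hOrbne
  have hyOrb : δ - ε' ≤ infDist y Orb := by
    have h1 : infDist q' Orb ≤ infDist y Orb + dist q' y :=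
      Metric.infDist_le_infDist_add_dist
    have h2 : dist q' y ≤ ε' := by rw [dist_comm]; exact hyq'
    linarith
  refine ⟨x, y, ε', max M M', hε', lt_max_of_lt_left hM, ?_, ?_, ?_, ?_⟩
  · intro t ht
    have h1 : infDist x Orb ≤ infDist (φ t x) Orb + dist x (φ t x) :=
      Metric.infDist_le_infDist_add_dist
    have h2 : infDist (φ t x) Orb ≤ ε := hxsink t (le_trans (le_max_left _ _) ht)
    rw [dist_comm]
    linarith
  · intro t ht
    have h1 : infDist x Orb ≤ infDist (φ t y) Orb + dist x (φ t y) :=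
      Metric.infDist_le_infDist_add_dist
    have h2 : infDist (φ t y) Orb ≤ ε' := hysink t (le_trans (le_max_right _ _) ht)
    rw [dist_comm]
    linarith
  · intro t ht
    have h1 : infDist y Orb ≤ infDist (φ t y) Orb + dist y (φ t y) :=
      Metric.infDist_le_infDist_add_dist
    have h2 : infDist (φ t y) Orb ≤ ε' := hysink t (le_trans (le_max_right _ _) ht)
    rw [dist_comm]
    linarith
  · intro t ht
    have h1 : δ ≤ dist q' (φ t x) := Metric.infDist_le_dist_of_mem (hxorbS t ht)
    have h2 : dist q' y ≤ ε' := by rw [dist_comm]; exact hyq'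
    have h3 : dist q' (φ t x) ≤ dist q' y + dist y (φ t x) := dist_triangle _ _ _
    rw [dist_comm]
    linarith

end Paper
end

section
/- Let (f^t)_{t≥0} be a continuous semiflow on a compact metric space (X,d) that is not minimal and has the gluing orbit property. Then its topological entropy is positive: h(f) > 0, where h(f) = lim_{ε→0} limsup_{T→∞} (ln s(T,ε))/T and s(T,ε) is the maximal cardinality of a (T,ε)-separated subset of X. -/
open Filter Set Metric

namespace Paper

variable {X : Type*}

/-! ### Auxiliary material for the proof of `stmt19`.

Strategy: since the semiflow is not minimal, there are `x₀ p` and `ε > 0` with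
`dist (φ t x₀) p ≥ 8ε` for all `t ≥ 0`.  Let `M = M(ε)` be the gluing constant.
For a word `w : ℕ → Bool` (of length `n`) consider the orbit sequence with `2n+1`
pieces: for `j < n`, piece `2j` is the orbit segment of `x₀` of length
`14M` or `21M` according to `w j`, piece `2j+1` is the single point `p`
(a "marker"), and piece `2n` is a long tail segment of the orbit of `x₀`.
A point shadowing this sequence is `ε`-close to `p` essentially only within `M`
of the markers, whose consecutive spacings encode the word.  Hence shadowing
points of distinct words are `(T̄,ε)`-separated, giving `2^n` separated points in
time `T̄ = 42Mn + (4n+1)M`, so the entropy is at least `log 2 / (2·47M) > 0`. -/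

section Stmt19Aux

variable [MetricSpace X]

private lemma sFlow_zero (C : ℕ → X × ℝ) (g : ℕ → ℝ) : sFlow C g 0 = 0 := rfl

private lemma sFlow_succ (C : ℕ → X × ℝ) (g : ℕ → ℝ) (i : ℕ) :
    sFlow C g (i + 1) = sFlow C g i + (C i).2 + g i := rfl

/-- Lengths of the `x`-segments, encoding the bit `w j`. -/
private def wLen (M : ℝ) (w : ℕ → Bool) (j : ℕ) : ℝ := if w j then 21*M else 14*M

/-- Length of the final tail segment. -/
private def wTheta (M : ℝ) (n : ℕ) : ℝ := 21*M*n + (2*(n:ℝ)+1)*M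

/-- The orbit sequence associated to a word. -/
private def wSeq (x p : X) (M : ℝ) (n : ℕ) (w : ℕ → Bool) : ℕ → X × ℝ := fun i =>
  if i = 2*n then (x, wTheta M n) else if i % 2 = 0 then (x, wLen M w (i/2)) else (p, 0)

private lemma wLen_lb {M : ℝ} (hM : 0 < M) (w : ℕ → Bool) (j : ℕ) : 14*M ≤ wLen M w j := by
  unfold wLen; split <;> linarith

private lemma wLen_ub {M : ℝ} (hM : 0 < M) (w : ℕ → Bool) (j : ℕ) : wLen M w j ≤ 21*M := by
  unfold wLen; split <;> linarith

private lemma wTheta_nonneg {M : ℝ} (hM : 0 < M) (n : ℕ) : 0 ≤ wTheta M n := by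
  have h0 : (0:ℝ) ≤ (n:ℝ) := Nat.cast_nonneg n
  unfold wTheta; nlinarith

variable {x p : X} {M : ℝ} {n : ℕ} {w : ℕ → Bool}

private lemma wSeq_even_fst (hj : j < n) : (wSeq x p M n w (2*j)).1 = x := by
  unfold wSeq
  rw [if_neg (by omega : ¬ (2*j = 2*n)), if_pos (by omega : (2*j) % 2 = 0)]

private lemma wSeq_even_snd (hj : j < n) : (wSeq x p M n w (2*j)).2 = wLen M w j := by
  unfold wSeq
  rw [if_neg (by omega : ¬ (2*j = 2*n)), if_pos (by omega : (2*j) % 2 = 0),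
    (by omega : (2*j)/2 = j)]

private lemma wSeq_odd_fst (j : ℕ) : (wSeq x p M n w (2*j+1)).1 = p := by
  unfold wSeq
  rw [if_neg (by omega : ¬ (2*j+1 = 2*n)), if_neg (by omega : ¬ ((2*j+1) % 2 = 0))]

private lemma wSeq_odd_snd (j : ℕ) : (wSeq x p M n w (2*j+1)).2 = 0 := by
  unfold wSeq
  rw [if_neg (by omega : ¬ (2*j+1 = 2*n)), if_neg (by omega : ¬ ((2*j+1) % 2 = 0))]

private lemma wSeq_last_fst : (wSeq x p M n w (2*n)).1 = x := by
  unfold wSeq; rw [if_pos rfl]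

private lemma wSeq_last_snd : (wSeq x p M n w (2*n)).2 = wTheta M n := by
  unfold wSeq; rw [if_pos rfl]

private lemma wSeq_len_nonneg (hM : 0 < M) (i : ℕ) : 0 ≤ (wSeq x p M n w i).2 := by
  unfold wSeq
  split
  · exact wTheta_nonneg hM n
  · split
    · have := wLen_lb hM w (i/2); linarith
    · exact le_rfl

variable {g : ℕ → ℝ}

private lemma sW_mono (hM : 0 < M) (hg : ∀ i < 2*n, 0 ≤ g i ∧ g i ≤ M) :
    ∀ i j, i ≤ j → j ≤ 2*n →
      sFlow (wSeq x p M n w) g i ≤ sFlow (wSeq x p M n w) g j := by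
  intro i j hij hj
  induction j with
  | zero => have : i = 0 := by omega
            subst this; exact le_rfl
  | succ j ih =>
    by_cases h : i = j + 1
    · subst h; exact le_rfl
    · have h1 : sFlow (wSeq x p M n w) g i ≤ sFlow (wSeq x p M n w) g j :=
        ih (by omega) (by omega)
      have h2 := (hg j (by omega)).1
      have h3 := wSeq_len_nonneg (x := x) (p := p) (M := M) (n := n) (w := w) hM j
      rw [sFlow_succ]; linarith

private lemma sW_nonneg (hM : 0 < M) (hg : ∀ i < 2*n, 0 ≤ g i ∧ g i ≤ M)
    {i : ℕ} (hi : i ≤ 2*n) : 0 ≤ sFlow (wSeq x p M n w) g i := by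
  have := sW_mono (x := x) (p := p) (M := M) (w := w) hM hg 0 i (Nat.zero_le _) hi
  rwa [sFlow_zero] at this

private lemma mW_eq (hj : j < n) :
    sFlow (wSeq x p M n w) g (2*j+1)
      = sFlow (wSeq x p M n w) g (2*j) + wLen M w j + g (2*j) := by
  rw [sFlow_succ, wSeq_even_snd hj]

private lemma mW_even_succ (hj : j < n) :
    sFlow (wSeq x p M n w) g (2*j+2)
      = sFlow (wSeq x p M n w) g (2*j+1) + g (2*j+1) := by
  have h : 2*j+2 = (2*j+1) + 1 := rfl
  rw [h, sFlow_succ, wSeq_odd_snd]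
  ring

private lemma mW_eq0 (hn : 0 < n) :
    sFlow (wSeq x p M n w) g (2*0+1) = wLen M w 0 + g (2*0) := by
  have h0 : sFlow (wSeq x p M n w) g (2*0) = 0 := rfl
  rw [mW_eq hn, h0, zero_add]

private lemma mW_bounds (hM : 0 < M) (hg : ∀ i < 2*n, 0 ≤ g i ∧ g i ≤ M) :
    ∀ j, j < n → 14*M*((j:ℝ)+1) ≤ sFlow (wSeq x p M n w) g (2*j+1) ∧
      sFlow (wSeq x p M n w) g (2*j+1) ≤ 21*M*((j:ℝ)+1) + (2*(j:ℝ)+1)*M := by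
  intro j
  induction j with
  | zero =>
    intro h0
    have e := mW_eq0 (x := x) (p := p) (M := M) (w := w) (g := g) h0
    have hG := hg (2*0) (by omega)
    have hl := wLen_lb hM w 0
    have hu := wLen_ub hM w 0
    rw [e]
    constructor <;> · push_cast; linarith
  | succ j ih =>
    intro hj
    obtain ⟨ih1, ih2⟩ := ih (by omega)
    have e1 : 2*(j+1) = 2*j+2 := by ring
    have e2 : 2*(j+1)+1 = 2*j+3 := by ring
    have em := mW_eq (x := x) (p := p) (M := M) (w := w) (g := g) hj
    rw [e2, e1] at em
    have eg := mW_even_succ (x := x) (p := p) (M := M) (w := w) (g := g) (by omega : j < n)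
    have hG1 := hg (2*j+1) (by omega)
    have hG2 := hg (2*j+2) (by omega)
    have hl := wLen_lb hM w (j+1)
    have hu := wLen_ub hM w (j+1)
    rw [e2]
    constructor <;> · push_cast; linarith

private lemma sW_loc :
    ∀ N, 0 < N → ∀ t : ℝ, 0 ≤ t → t ≤ sFlow (wSeq x p M n w) g N →
      ∃ i, i < N ∧ sFlow (wSeq x p M n w) g i ≤ t ∧
        t ≤ sFlow (wSeq x p M n w) g (i+1) := by
  intro N
  induction N with
  | zero => intro h; exact absurd h (lt_irrefl 0)
  | succ N ih =>
    intro _ t ht hts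
    by_cases hN : N = 0
    · subst hN
      exact ⟨0, Nat.zero_lt_one, by rwa [sFlow_zero], hts⟩
    · by_cases hc : t ≤ sFlow (wSeq x p M n w) g N
      · obtain ⟨i, h1, h2, h3⟩ := ih (by omega) t ht hc
        exact ⟨i, by omega, h2, h3⟩
      · exact ⟨N, by omega, (not_le.mp hc).le, hts⟩

/-- Near-`p` times of a shadowing point lie within `M` of a marker. -/
private lemma claimA {φ : ℝ → X → X} {z : X} {ε : ℝ}
    (hM : 0 < M) (hε : 0 < ε) (hn : 0 < n)
    (hav : ∀ t : ℝ, 0 ≤ t → 8*ε ≤ dist (φ t x) p)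
    (hg : ∀ i < 2*n, 0 ≤ g i ∧ g i ≤ M)
    (hsh : ∀ j < 2*n+1, ∀ t ∈ Set.Icc (0:ℝ) ((wSeq x p M n w j).2),
      dist (φ (sFlow (wSeq x p M n w) g j + t) z) (φ t (wSeq x p M n w j).1) < ε) :
    ∀ t : ℝ, 0 ≤ t → t ≤ sFlow (wSeq x p M n w) g (2*n) + wTheta M n →
      dist (φ t z) p ≤ 3*ε →
      ∃ j, j < n ∧ |t - sFlow (wSeq x p M n w) g (2*j+1)| ≤ M := by
  intro t ht htop hcl
  by_cases hcase : t ≤ sFlow (wSeq x p M n w) g (2*n)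
  · obtain ⟨i, hiN, h1, h2⟩ := sW_loc (2*n) (by omega) t ht hcase
    rcases Nat.even_or_odd i with he | ho
    · obtain ⟨j, rfl⟩ : ∃ j, i = 2*j := by
        obtain ⟨r, hr⟩ := he; exact ⟨r, by omega⟩
      have hj : j < n := by omega
      by_cases hin : t ≤ sFlow (wSeq x p M n w) g (2*j) + wLen M w j
      · exfalso
        have hmem : t - sFlow (wSeq x p M n w) g (2*j)
            ∈ Set.Icc (0:ℝ) ((wSeq x p M n w (2*j)).2) := by
          rw [Set.mem_Icc, wSeq_even_snd hj]
          exact ⟨by linarith, by linarith⟩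
        have hd := hsh (2*j) (by omega) _ hmem
        rw [wSeq_even_fst hj] at hd
        have hsum : sFlow (wSeq x p M n w) g (2*j)
            + (t - sFlow (wSeq x p M n w) g (2*j)) = t := by ring
        rw [hsum] at hd
        have h8 := hav (t - sFlow (wSeq x p M n w) g (2*j)) (by linarith)
        have htr := dist_triangle (φ (t - sFlow (wSeq x p M n w) g (2*j)) x) (φ t z) p
        rw [dist_comm] at hd
        linarith
      · refine ⟨j, hj, ?_⟩
        have hm := mW_eq (x := x) (p := p) (M := M) (w := w) (g := g) hj
        have hG := hg (2*j) (by omega)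
        have hin' := not_le.mp hin
        rw [abs_le]
        exact ⟨by linarith, by linarith⟩
    · obtain ⟨j, rfl⟩ : ∃ j, i = 2*j+1 := by
        obtain ⟨r, hr⟩ := ho; exact ⟨r, by omega⟩
      have hj : j < n := by omega
      refine ⟨j, hj, ?_⟩
      have hE := mW_even_succ (x := x) (p := p) (M := M) (w := w) (g := g) hj
      have hG := hg (2*j+1) (by omega)
      have h2' : t ≤ sFlow (wSeq x p M n w) g (2*j+2) := h2
      rw [abs_le]
      exact ⟨by linarith, by linarith⟩
  · exfalso
    have hcase' := not_le.mp hcase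
    have hmem : t - sFlow (wSeq x p M n w) g (2*n)
        ∈ Set.Icc (0:ℝ) ((wSeq x p M n w (2*n)).2) := by
      rw [Set.mem_Icc, wSeq_last_snd]
      exact ⟨by linarith, by linarith⟩
    have hd := hsh (2*n) (by omega) _ hmem
    rw [wSeq_last_fst] at hd
    have hsum : sFlow (wSeq x p M n w) g (2*n)
        + (t - sFlow (wSeq x p M n w) g (2*n)) = t := by ring
    rw [hsum] at hd
    have h8 := hav (t - sFlow (wSeq x p M n w) g (2*n)) (by linarith)
    have htr := dist_triangle (φ (t - sFlow (wSeq x p M n w) g (2*n)) x) (φ t z) p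
    rw [dist_comm] at hd
    linarith

/-- Two shadowing points that are not `(T̄, ε)`-separated shadow the same word. -/
private lemma words_eq {φ : ℝ → X → X} {z z' : X} {ε : ℝ} {w' : ℕ → Bool} {g' : ℕ → ℝ}
    (hM : 0 < M) (hε : 0 < ε) (hn : 0 < n) (hp0 : φ 0 p = p)
    (hav : ∀ t : ℝ, 0 ≤ t → 8*ε ≤ dist (φ t x) p)
    (hg : ∀ i < 2*n, 0 ≤ g i ∧ g i ≤ M)
    (hg' : ∀ i < 2*n, 0 ≤ g' i ∧ g' i ≤ M)
    (hsh : ∀ j < 2*n+1, ∀ t ∈ Set.Icc (0:ℝ) ((wSeq x p M n w j).2),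
      dist (φ (sFlow (wSeq x p M n w) g j + t) z) (φ t (wSeq x p M n w j).1) < ε)
    (hsh' : ∀ j < 2*n+1, ∀ t ∈ Set.Icc (0:ℝ) ((wSeq x p M n w' j).2),
      dist (φ (sFlow (wSeq x p M n w') g' j + t) z') (φ t (wSeq x p M n w' j).1) < ε)
    (hns : ∀ t : ℝ, 0 ≤ t → t ≤ 42*M*n + (4*(n:ℝ)+1)*M →
      dist (φ t z) (φ t z') ≤ ε) :
    ∀ j < n, w j = w' j := by
  -- upper bound for markers of `w'`
  have hm'ub : ∀ j, j < n → sFlow (wSeq x p M n w') g' (2*j+1) ≤ wTheta M n := by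
    intro j hj
    have hb := (mW_bounds (x := x) (p := p) (M := M) (w := w') hM hg' j hj).2
    have hjn : (j:ℝ)+1 ≤ (n:ℝ) := by exact_mod_cast hj
    have h1 : 21*M*((j:ℝ)+1) ≤ 21*M*(n:ℝ) := by nlinarith
    have h2 : (2*(j:ℝ)+1)*M ≤ (2*(n:ℝ)+1)*M := by nlinarith
    unfold wTheta; linarith
  have hθT : wTheta M n ≤ 42*M*n + (4*(n:ℝ)+1)*M := by
    have h0 : (0:ℝ) ≤ (n:ℝ) := Nat.cast_nonneg n
    have h1 : 0 ≤ M*(n:ℝ) := by positivity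
    unfold wTheta; nlinarith
  -- each marker of `w'` is `M`-close to some marker of `w`
  have hA : ∀ j, j < n →
      ∃ i, i < n ∧ |sFlow (wSeq x p M n w') g' (2*j+1)
        - sFlow (wSeq x p M n w) g (2*i+1)| ≤ M := by
    intro j hj
    have hm0 : 0 ≤ sFlow (wSeq x p M n w') g' (2*j+1) := sW_nonneg hM hg' (by omega)
    have hub := hm'ub j hj
    have hmem : (0:ℝ) ∈ Set.Icc (0:ℝ) ((wSeq x p M n w' (2*j+1)).2) := by
      rw [Set.mem_Icc, wSeq_odd_snd]
      exact ⟨le_rfl, le_rfl⟩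
    have hq := hsh' (2*j+1) (by omega) 0 hmem
    rw [wSeq_odd_fst, add_zero, hp0] at hq
    have hzz := hns (sFlow (wSeq x p M n w') g' (2*j+1)) hm0 (le_trans hub hθT)
    have htr := dist_triangle (φ (sFlow (wSeq x p M n w') g' (2*j+1)) z)
      (φ (sFlow (wSeq x p M n w') g' (2*j+1)) z') p
    have hcl : dist (φ (sFlow (wSeq x p M n w') g' (2*j+1)) z) p ≤ 3*ε := by linarith
    have hSn : 0 ≤ sFlow (wSeq x p M n w) g (2*n) := sW_nonneg hM hg le_rfl
    exact claimA hM hε hn hav hg hsh _ hm0 (by linarith) hcl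
  -- induction on markers
  have key : ∀ j, j < n →
      |sFlow (wSeq x p M n w) g (2*j+1) - sFlow (wSeq x p M n w') g' (2*j+1)| ≤ M
        ∧ w j = w' j := by
    intro j
    induction j with
    | zero =>
      intro h0
      obtain ⟨i, hi, hd⟩ := hA 0 h0
      have hi0 : i = 0 := by
        by_contra hne
        have h1i : (1:ℝ) ≤ (i:ℝ) := by exact_mod_cast (by omega : 1 ≤ i)
        have hlb := (mW_bounds (x := x) (p := p) (M := M) (w := w) hM hg i hi).1
        have hub' := (mW_bounds (x := x) (p := p) (M := M) (w := w') hM hg' 0 h0).2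
        simp only [Nat.cast_zero] at hub'
        rw [abs_le] at hd
        nlinarith [hd.1, hd.2, mul_le_mul_of_nonneg_left h1i hM.le]
      subst hi0
      have hdc : |sFlow (wSeq x p M n w) g (2*0+1)
          - sFlow (wSeq x p M n w') g' (2*0+1)| ≤ M := by
        rw [abs_sub_comm]; exact hd
      refine ⟨hdc, ?_⟩
      have hm := mW_eq0 (x := x) (p := p) (M := M) (w := w) (g := g) h0
      have hm' := mW_eq0 (x := x) (p := p) (M := M) (w := w') (g := g') h0
      have hG := hg (2*0) (by omega)
      have hG' := hg' (2*0) (by omega)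
      rw [abs_le] at hdc
      cases hw : w 0 <;> cases hw' : w' 0 <;> try rfl
      · exfalso
        have hv : wLen M w 0 = 14*M := by simp [wLen, hw]
        have hv' : wLen M w' 0 = 21*M := by simp [wLen, hw']
        rw [hm, hm', hv, hv'] at hdc
        obtain ⟨hdc1, hdc2⟩ := hdc
        linarith
      · exfalso
        have hv : wLen M w 0 = 21*M := by simp [wLen, hw]
        have hv' : wLen M w' 0 = 14*M := by simp [wLen, hw']
        rw [hm, hm', hv, hv'] at hdc
        obtain ⟨hdc1, hdc2⟩ := hdc
        linarith
    | succ j ih =>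
      intro hj
      obtain ⟨ihd, _⟩ := ih (by omega)
      obtain ⟨i, hi, hd⟩ := hA (j+1) hj
      have e1 : 2*(j+1) = 2*j+2 := by ring
      have e2 : 2*(j+1)+1 = 2*j+3 := by ring
      rw [e2] at hd ⊢
      have em : sFlow (wSeq x p M n w) g (2*j+3)
          = sFlow (wSeq x p M n w) g (2*j+2) + wLen M w (j+1) + g (2*j+2) := by
        have := mW_eq (x := x) (p := p) (M := M) (w := w) (g := g) hj
        rwa [e2, e1] at this
      have em' : sFlow (wSeq x p M n w') g' (2*j+3)
          = sFlow (wSeq x p M n w') g' (2*j+2) + wLen M w' (j+1) + g' (2*j+2) := by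
        have := mW_eq (x := x) (p := p) (M := M) (w := w') (g := g') hj
        rwa [e2, e1] at this
      have eg : sFlow (wSeq x p M n w) g (2*j+2)
          = sFlow (wSeq x p M n w) g (2*j+1) + g (2*j+1) :=
        mW_even_succ (x := x) (p := p) (M := M) (w := w) (g := g) (by omega : j < n)
      have eg' : sFlow (wSeq x p M n w') g' (2*j+2)
          = sFlow (wSeq x p M n w') g' (2*j+1) + g' (2*j+1) :=
        mW_even_succ (x := x) (p := p) (M := M) (w := w') (g := g') (by omega : j < n)
      have hGw1 := hg (2*j+1) (by omega)
      have hGw2 := hg (2*j+2) (by omega)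
      have hGv1 := hg' (2*j+1) (by omega)
      have hGv2 := hg' (2*j+2) (by omega)
      have hlw := wLen_lb hM w (j+1)
      have huw := wLen_ub hM w (j+1)
      have hlv := wLen_lb hM w' (j+1)
      have huv := wLen_ub hM w' (j+1)
      have hij : i = j+1 := by
        by_contra hne
        rcases Nat.lt_or_ge i (j+1) with hle | hge
        · have him : sFlow (wSeq x p M n w) g (2*i+1)
              ≤ sFlow (wSeq x p M n w) g (2*j+1) :=
            sW_mono hM hg (2*i+1) (2*j+1) (by omega) (by omega)
          rw [abs_le] at hd ihd
          linarith [hd.1, hd.2, ihd.1, ihd.2]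
        · have hge' : j+2 ≤ i := by omega
          have hj2 : j+2 < n := by omega
          have e3 : 2*(j+2) = 2*j+4 := by ring
          have e4 : 2*(j+2)+1 = 2*j+5 := by ring
          have him : sFlow (wSeq x p M n w) g (2*j+5)
              ≤ sFlow (wSeq x p M n w) g (2*i+1) := by
            have := sW_mono (x := x) (p := p) (M := M) (w := w) hM hg (2*(j+2)+1) (2*i+1) (by omega) (by omega)
            rwa [e4] at this
          have em2 : sFlow (wSeq x p M n w) g (2*j+5)
              = sFlow (wSeq x p M n w) g (2*j+4) + wLen M w (j+2) + g (2*j+4) := by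
            have := mW_eq (x := x) (p := p) (M := M) (w := w) (g := g) hj2
            rwa [e4, e3] at this
          have eg2 : sFlow (wSeq x p M n w) g (2*j+4)
              = sFlow (wSeq x p M n w) g (2*j+3) + g (2*j+3) := by
            have := mW_even_succ (x := x) (p := p) (M := M) (w := w) (g := g) (by omega : j+1 < n)
            rwa [(by ring : 2*(j+1)+2 = 2*j+4), (by ring : 2*(j+1)+1 = 2*j+3)] at this
          have hGw3 := hg (2*j+3) (by omega)
          have hGw4 := hg (2*j+4) (by omega)
          have hlw2 := wLen_lb hM w (j+2)
          rw [abs_le] at hd ihd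
          linarith [hd.1, hd.2, ihd.1, ihd.2]
      subst hij
      have hdc : |sFlow (wSeq x p M n w) g (2*j+3)
          - sFlow (wSeq x p M n w') g' (2*j+3)| ≤ M := by
        rw [abs_sub_comm]; exact hd
      refine ⟨hdc, ?_⟩
      rw [abs_le] at hdc ihd
      cases hw : w (j+1) <;> cases hw' : w' (j+1) <;> try rfl
      · exfalso
        have hv : wLen M w (j+1) = 14*M := by simp [wLen, hw]
        have hv' : wLen M w' (j+1) = 21*M := by simp [wLen, hw']
        rw [hv] at em; rw [hv'] at em'
        linarith [hdc.1, hdc.2, ihd.1, ihd.2]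
      · exfalso
        have hv : wLen M w (j+1) = 21*M := by simp [wLen, hw]
        have hv' : wLen M w' (j+1) = 14*M := by simp [wLen, hw']
        rw [hv] at em; rw [hv'] at em'
        linarith [hdc.1, hdc.2, ihd.1, ihd.2]
  exact fun j hj => (key j hj).2

/-- Separated sets in a compact space have bounded cardinality. -/
private lemma sepFlow_bddAbove {φ : ℝ → X → X} [CompactSpace X]
    (hc : Continuous fun q : ℝ × X => φ q.1 q.2) (T ε : ℝ) (hε : 0 < ε) :
    BddAbove {N : ℕ | ∃ E : Finset X, IsSepFlow φ T ε ↑E ∧ E.card = N} := by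
  set T' := max T 0 with hT'
  have hK : IsCompact (Set.Icc (0:ℝ) T' ×ˢ (Set.univ : Set X)) :=
    isCompact_Icc.prod isCompact_univ
  have huc := hK.uniformContinuousOn_of_continuous hc.continuousOn
  rw [Metric.uniformContinuousOn_iff] at huc
  obtain ⟨δ, hδ, hδ'⟩ := huc ε hε
  obtain ⟨F, hFfin, hFcov⟩ :
      ∃ F : Set X, F.Finite ∧ Set.univ ⊆ ⋃ y ∈ F, Metric.ball y (δ/2) :=
    (Metric.totallyBounded_iff.mp isCompact_univ.totallyBounded) (δ/2) (by linarith)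
  refine ⟨hFfin.toFinset.card, ?_⟩
  rintro N ⟨E, hE, rfl⟩
  have hnet : ∀ e : X, ∃ y, y ∈ hFfin.toFinset ∧ e ∈ Metric.ball y (δ/2) := by
    intro e
    have := hFcov (Set.mem_univ e)
    rw [Set.mem_iUnion₂] at this
    obtain ⟨y, hy1, hy2⟩ := this
    exact ⟨y, hFfin.mem_toFinset.mpr hy1, hy2⟩
  choose f hf1 hf2 using hnet
  refine Finset.card_le_card_of_injOn f (fun e _ => hf1 e) ?_
  intro e1 h1 e2 h2 hfe
  by_contra hne
  obtain ⟨t, htIcc, htd⟩ := hE e1 (by simpa using h1) e2 (by simpa using h2) hne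
  have hd1 := hf2 e1
  have hd2 := hf2 e2
  rw [Metric.mem_ball] at hd1 hd2
  rw [hfe] at hd1
  have hd12 : dist e1 e2 < δ := by
    have htr := dist_triangle e1 (f e2) e2
    rw [dist_comm (f e2) e2] at htr
    linarith [htr, hd1, hd2]
  have htm : t ∈ Set.Icc (0:ℝ) T' := ⟨htIcc.1, le_trans htIcc.2 (le_max_left T 0)⟩
  have hkey := hδ' (t, e1) ⟨htm, Set.mem_univ _⟩ (t, e2) ⟨htm, Set.mem_univ _⟩
    (by simpa [Prod.dist_eq, dist_self, dist_nonneg] using hd12)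
  simp only at hkey
  linarith

end Stmt19Aux
theorem stmt19 [MetricSpace X] [CompactSpace X] (φ : ℝ → X → X)
    (hsf : IsSemiflow φ) (hnm : ¬ MinimalFlow φ) (hgo : GluingFlow φ) :
    0 < topEntFlow φ := by
  classical
  obtain ⟨hid, -, hcont⟩ := hsf
  unfold MinimalFlow at hnm
  push_neg at hnm
  obtain ⟨x0, hx0⟩ := hnm
  obtain ⟨p, hp⟩ : ∃ p : X, p ∉ closure {y : X | ∃ t : ℝ, 0 ≤ t ∧ φ t x0 = y} := by
    by_contra hall
    push_neg at hall
    exact hx0 hall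
  rw [Metric.mem_closure_iff] at hp
  push_neg at hp
  obtain ⟨r, hr, hrf⟩ := hp
  set ε : ℝ := r/8 with hεd
  have hε : 0 < ε := by rw [hεd]; positivity
  have hav : ∀ t : ℝ, 0 ≤ t → 8*ε ≤ dist (φ t x0) p := by
    intro t ht
    have h1 := hrf (φ t x0) ⟨t, ht, rfl⟩
    rw [dist_comm] at h1
    have h8 : 8*ε = r := by rw [hεd]; ring
    linarith
  obtain ⟨M, hM, Hg⟩ := hgo ε hε
  have hp0 : φ 0 p = p := hid p
  -- Step 1: `2^n` separated points within time `42Mn + (4n+1)M`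
  have Hsep : ∀ n : ℕ, 0 < n →
      (2:ℕ)^n ≤ sepFlow φ (42*M*(n:ℝ) + (4*(n:ℝ)+1)*M) ε := by
    intro n hn
    set ext : (Fin n → Bool) → (ℕ → Bool) :=
      fun v i => if h : i < n then v ⟨i, h⟩ else false with hext
    have Hw := fun v : Fin n → Bool =>
      Hg (2*n+1) (by omega) (wSeq x0 p M n (ext v)) (fun j _ => wSeq_len_nonneg hM j)
    choose gf hgf zf hzf using Hw
    have hgf' : ∀ v, ∀ i < 2*n, 0 ≤ gf v i ∧ gf v i ≤ M := by
      intro v i hi; exact hgf v i (by omega)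
    have hsepv : ∀ v v' : Fin n → Bool, v ≠ v' →
        ∃ t ∈ Set.Icc (0:ℝ) (42*M*(n:ℝ) + (4*(n:ℝ)+1)*M),
          ε < dist (φ t (zf v)) (φ t (zf v')) := by
      intro v v' hne
      by_contra hno
      push_neg at hno
      have hns : ∀ t : ℝ, 0 ≤ t → t ≤ 42*M*(n:ℝ) + (4*(n:ℝ)+1)*M →
          dist (φ t (zf v)) (φ t (zf v')) ≤ ε := fun t h1 h2 => hno t ⟨h1, h2⟩
      have hwords := words_eq hM hε hn hp0 hav (hgf' v) (hgf' v')
        (hzf v) (hzf v') hns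
      apply hne
      funext i
      have hi := hwords i.1 i.2
      simpa [hext, i.isLt] using hi
    have hinj : Function.Injective zf := by
      intro v v' he
      by_contra hne
      obtain ⟨t, -, hd⟩ := hsepv v v' hne
      rw [he, dist_self] at hd
      linarith
    have hcard : (Finset.univ.image zf).card = 2^n := by
      rw [Finset.card_image_of_injective _ hinj, Finset.card_univ, Fintype.card_fun]
      simp
    apply le_csSup (sepFlow_bddAbove hcont _ _ hε)
    refine ⟨Finset.univ.image zf, ?_, hcard⟩
    intro a ha b hb hab
    rw [Finset.coe_image] at ha hb
    obtain ⟨v, -, rfl⟩ := ha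
    obtain ⟨v', -, rfl⟩ := hb
    exact hsepv v v' (fun h => hab (by rw [h]))
  -- Step 2: entropy bound
  set c : ℝ := 47*M with hcd
  have hc : 0 < c := by rw [hcd]; linarith
  set c0 : ℝ := Real.log 2 / (2*c) with hc0d
  have hlog2 : 0 < Real.log 2 := Real.log_pos one_lt_two
  have hc0 : 0 < c0 := by rw [hc0d]; exact div_pos hlog2 (by linarith)
  have hsmono : ∀ T T' : ℝ, T ≤ T' → sepFlow φ T ε ≤ sepFlow φ T' ε := by
    intro T T' h
    apply csSup_le_csSup (sepFlow_bddAbove hcont T' ε hε)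
    · refine ⟨0, ⟨∅, ?_, Finset.card_empty⟩⟩
      intro a ha
      exact absurd ha (by simp)
    · rintro N ⟨E, hE, rfl⟩
      refine ⟨E, ?_, rfl⟩
      intro a ha b hb hab
      obtain ⟨t, ht, hd⟩ := hE a ha b hb hab
      exact ⟨t, ⟨ht.1, ht.2.trans h⟩, hd⟩
  have hev : ∀ T : ℝ, c ≤ T → c0 ≤ Real.log (sepFlow φ T ε) / T := by
    intro T hT
    have hT0 : 0 < T := lt_of_lt_of_le hc hT
    set n : ℕ := ⌊T / c⌋₊ with hnd
    have h1n : 1 ≤ n := by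
      rw [hnd]
      apply Nat.le_floor
      rw [Nat.cast_one, le_div_iff₀ hc]
      linarith
    have h1nr : (1:ℝ) ≤ (n:ℝ) := by exact_mod_cast h1n
    have hcnT : c * n ≤ T := by
      have h := Nat.floor_le (show 0 ≤ T / c from div_nonneg hT0.le hc.le)
      rw [← hnd] at h
      calc c * n = (n:ℝ) * c := by ring
        _ ≤ (T/c) * c := mul_le_mul_of_nonneg_right h hc.le
        _ = T := by field_simp
    have hTcn : T < c * ((n:ℝ)+1) := by
      have h := Nat.lt_floor_add_one (T / c)
      rw [← hnd] at h
      calc T = (T/c)*c := by field_simp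
        _ < ((n:ℝ)+1)*c := mul_lt_mul_of_pos_right h hc
        _ = c*((n:ℝ)+1) := by ring
    have hTn : 42*M*(n:ℝ) + (4*(n:ℝ)+1)*M ≤ c * n := by
      rw [hcd]
      nlinarith
    have hs1 : (2:ℕ)^n ≤ sepFlow φ T ε :=
      le_trans (Hsep n h1n) (hsmono _ _ (by linarith))
    have hs2 : ((2:ℝ))^n ≤ (sepFlow φ T ε : ℝ) := by exact_mod_cast hs1
    have hlog : (n:ℝ) * Real.log 2 ≤ Real.log (sepFlow φ T ε) := by
      rw [← Real.log_pow]
      exact Real.log_le_log (by positivity) hs2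
    rw [hc0d, div_le_div_iff₀ (by linarith) hT0]
    have h2cn : c*((n:ℝ)+1) ≤ 2*c*(n:ℝ) := by nlinarith
    have e1 : Real.log 2 * T ≤ Real.log 2 * (2*c*(n:ℝ)) :=
      mul_le_mul_of_nonneg_left (by linarith) hlog2.le
    have e2 : (n:ℝ)*Real.log 2 * (2*c) ≤ Real.log (sepFlow φ T ε) * (2*c) :=
      mul_le_mul_of_nonneg_right hlog (by linarith)
    have e3 : Real.log 2 * (2*c*(n:ℝ)) = (n:ℝ) * Real.log 2 * (2*c) := by ring
    linarith
  have hlimsup : (c0 : EReal) ≤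
      Filter.limsup (fun T : ℝ =>
        ((Real.log (sepFlow φ T ε) / T : ℝ) : EReal)) Filter.atTop := by
    have hev' : (fun _ : ℝ => (c0 : EReal)) ≤ᶠ[Filter.atTop]
        fun T : ℝ => ((Real.log (sepFlow φ T ε) / T : ℝ) : EReal) := by
      filter_upwards [Filter.eventually_ge_atTop c] with T hT
      exact_mod_cast hev T hT
    calc (c0 : EReal) = Filter.limsup (fun _ : ℝ => (c0 : EReal)) Filter.atTop :=
          (Filter.limsup_const _).symm
      _ ≤ _ := Filter.limsup_le_limsup hev'
  have hfin : (c0 : EReal) ≤ topEntFlow φ := by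
    refine le_trans hlimsup ?_
    unfold topEntFlow
    exact le_iSup₂ (f := fun (e : ℝ) (_ : 0 < e) =>
      Filter.limsup (fun T : ℝ => ((Real.log (sepFlow φ T e) / T : ℝ) : EReal))
        Filter.atTop) ε hε
  refine lt_of_lt_of_le ?_ hfin
  exact_mod_cast hc0

end Paper
end
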